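/- Fix 0<q<1 and α>−1. Then Σ_{j=0}^{∞} π̃_j^{(α)} = ∞, i.e. the partial sums Σ_{j=0}^{n} π̃_j^{(α)} tend to +∞ as n→∞. -/

import Mathlib

/-!
With `g n = 1 - γ(n, α+1; q)` we have `r_n = g (n+1) / g n`, so
`λ̃_k / μ̃_{k+1} = q (1 - q^{k+α+1}) / (1 - q^{k+1}) · g k / g (k+2)`
and the product telescopes:
`π̃_n = q^n (q^{α+1};q)_n / (q;q)_n · g 1 / (g n · g (n+1))`,
using `g 0 = 1` since `(1;q)_∞ = 0`. Writing `(a;q)_∞ = exp (∑ log (1 - a q^k))` gives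
`1 - (a;q)_∞ ≤ a / ((1 - a)(1 - q))`, and `(q^{n+α+1};q)_∞ ≤ 1` then yields `g n = O(q^n)`.
The factors `q^n` cancel, so `π̃_n` stays above a positive constant and the series diverges.
-/

open Finset

/-- The finite q-Pochhammer symbol `(a;q)_n = ∏_{k=0}^{n−1} (1 − a q^k)`. -/
noncomputable def qPochN (q a : ℝ) (n : ℕ) : ℝ :=
  ∏ k ∈ Finset.range n, (1 - a * q ^ k)

/-- The infinite q-Pochhammer symbol `(a;q)_∞ = ∏_{k=0}^∞ (1 − a q^k)`. -/
noncomputable def qPochInf (q a : ℝ) : ℝ :=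
  ∏' k : ℕ, (1 - a * q ^ k)

/-- `γ(u,v;q) = (q^u;q)_∞/(q^{u+v};q)_∞`. -/
noncomputable def qgamma (q u v : ℝ) : ℝ :=
  qPochInf q (q ^ u) / qPochInf q (q ^ (u + v))

/-- `r_n^{(α)} = (1−γ(n+1,α+1;q))/(1−γ(n,α+1;q))`. -/
noncomputable def rQL (q α : ℝ) (n : ℕ) : ℝ :=
  (1 - qgamma q ((n : ℝ) + 1) (α + 1)) / (1 - qgamma q (n : ℝ) (α + 1))

/-- The birth rates `λ̃_n^{(α)} = q^{−2n−α−1}(1−q^{n+α+1})/r_n^{(α)}`. -/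
noncomputable def lamQL (q α : ℝ) (n : ℕ) : ℝ :=
  q ^ (-(2 * (n : ℝ)) - α - 1) * (1 - q ^ ((n : ℝ) + α + 1)) / rQL q α n

/-- The death rates `μ̃_n^{(α)} = q^{−2n−α}(1−q^n) r_n^{(α)}`. -/
noncomputable def muQL (q α : ℝ) (n : ℕ) : ℝ :=
  q ^ (-(2 * (n : ℝ)) - α) * (1 - q ^ (n : ℝ)) * rQL q α n

/-- `π̃_n^{(α)} = ∏_{k=0}^{n−1} λ̃_k^{(α)}/μ̃_{k+1}^{(α)}` (with `π̃_0 = 1`). -/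
noncomputable def piQL (q α : ℝ) (n : ℕ) : ℝ :=
  ∏ k ∈ Finset.range n, lamQL q α k / muQL q α (k + 1)

/-- `T̃_k^{(α)} = Σ_{j=0}^{k} π̃_j^{(α)}`. -/
noncomputable def TQL (q α : ℝ) (k : ℕ) : ℝ :=
  ∑ j ∈ Finset.range (k + 1), piQL q α j

/-- The descending q-Pochhammer symbol `(q^k;q^{−1})_ℓ = ∏_{i=0}^{ℓ−1}(1−q^{k−i})`. -/
noncomputable def qPochDesc (q : ℝ) (k ℓ : ℕ) : ℝ :=
  ∏ i ∈ Finset.range ℓ, (1 - q ^ ((k : ℝ) - (i : ℝ)))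

open Filter Real

theorem Finset.prod_range_div_add_two {G : Type*} [CommGroupWithZero G] {f : ℕ → G}
    (hf : ∀ k, f k ≠ 0) (n : ℕ) :
    ∏ k ∈ range n, f k / f (k + 2) = f 0 * f 1 / (f n * f (n + 1)) := by
  induction n with
  | zero => simp [hf]
  | succ n ih =>
    rw [prod_range_succ, ih, div_mul_div_comm, mul_assoc (f n), mul_comm (f n),
      mul_div_mul_right _ _ (hf n)]

theorem tendsto_sum_range_atTop_of_le {f : ℕ → ℝ} {c : ℝ} (hc : 0 < c) (hf : ∀ n, c ≤ f n) :
    Tendsto (fun n => ∑ i ∈ range n, f i) atTop atTop := by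
  refine (not_summable_iff_tendsto_nat_atTop_of_nonneg fun n => hc.le.trans (hf n)).mp
    fun hs => ?_
  obtain ⟨n, hn⟩ := (hs.tendsto_atTop_zero.eventually (gt_mem_nhds hc)).exists
  exact (hf n).not_gt hn

section qPochhammer

variable {q a b c : ℝ} (hq0 : 0 ≤ q) (hq1 : q < 1)
include hq0 hq1

theorem one_sub_mul_pow_pos (ha : a < 1) (k : ℕ) : 0 < 1 - a * q ^ k := by
  have hqk : q ^ k ≤ 1 := pow_le_one₀ hq0 hq1.le
  rcases le_or_gt a 0 with h | h
  · nlinarith [pow_nonneg hq0 k]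
  · nlinarith

theorem qPochN_pos (ha : a < 1) (n : ℕ) : 0 < qPochN q a n :=
  prod_pos fun k _ => one_sub_mul_pow_pos hq0 hq1 ha k

theorem qPochN_le_one (ha0 : 0 ≤ a) (ha1 : a < 1) (n : ℕ) : qPochN q a n ≤ 1 :=
  prod_le_one (fun k _ => (one_sub_mul_pow_pos hq0 hq1 ha1 k).le)
    fun k _ => by nlinarith [mul_nonneg ha0 (pow_nonneg hq0 k)]

theorem summable_log_one_sub_mul_pow : Summable fun k => log (1 - a * q ^ k) := by
  simpa [sub_eq_add_neg] using
    summable_log_one_add_of_summable ((summable_geometric_of_lt_one hq0 hq1).mul_left (-a))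

theorem qPochInf_eq_exp_tsum_log (ha : a < 1) :
    qPochInf q a = exp (∑' k, log (1 - a * q ^ k)) :=
  (rexp_tsum_eq_tprod (one_sub_mul_pow_pos hq0 hq1 ha)
    (summable_log_one_sub_mul_pow hq0 hq1)).symm

theorem qPochInf_pos (ha : a < 1) : 0 < qPochInf q a := by
  rw [qPochInf_eq_exp_tsum_log hq0 hq1 ha]
  exact exp_pos _

theorem log_one_sub_mul_pow_nonpos (ha0 : 0 ≤ a) (ha1 : a < 1) (k : ℕ) :
    log (1 - a * q ^ k) ≤ 0 :=
  log_nonpos (one_sub_mul_pow_pos hq0 hq1 ha1 k).le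
    (by nlinarith [mul_nonneg ha0 (pow_nonneg hq0 k)])

theorem qPochInf_le_one (ha0 : 0 ≤ a) (ha1 : a < 1) : qPochInf q a ≤ 1 := by
  rw [qPochInf_eq_exp_tsum_log hq0 hq1 ha1, exp_le_one_iff]
  exact tsum_nonpos (log_one_sub_mul_pow_nonpos hq0 hq1 ha0 ha1)

theorem qPochInf_le_qPochN (ha0 : 0 ≤ a) (ha1 : a < 1) (n : ℕ) :
    qPochInf q a ≤ qPochN q a n := by
  have hsplit := (summable_log_one_sub_mul_pow (a := a) hq0 hq1).sum_add_tsum_nat_add n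
  have htail : ∑' k, log (1 - a * q ^ (k + n)) ≤ 0 :=
    tsum_nonpos fun k => log_one_sub_mul_pow_nonpos hq0 hq1 ha0 ha1 (k + n)
  rw [qPochInf_eq_exp_tsum_log hq0 hq1 ha1, qPochN, ← hsplit, ← prod_congr rfl
    fun k _ => exp_log (one_sub_mul_pow_pos hq0 hq1 ha1 k), ← exp_sum]
  exact exp_le_exp.mpr (by linarith)

theorem qPochInf_lt_qPochInf (hbc : b < c) (hc : c < 1) : qPochInf q c < qPochInf q b := by
  rw [qPochInf_eq_exp_tsum_log hq0 hq1 hc, qPochInf_eq_exp_tsum_log hq0 hq1 (hbc.trans hc),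
    exp_lt_exp]
  refine Summable.tsum_lt_tsum (i := 0) (fun k => ?_) ?_ (summable_log_one_sub_mul_pow hq0 hq1)
    (summable_log_one_sub_mul_pow hq0 hq1)
  · exact log_le_log (one_sub_mul_pow_pos hq0 hq1 hc k)
      (by nlinarith [pow_nonneg hq0 k])
  · simpa using log_lt_log (by linarith) (by linarith : 1 - c < 1 - b)

theorem one_sub_qPochInf_le (ha0 : 0 ≤ a) (ha1 : a < 1) :
    1 - qPochInf q a ≤ a / ((1 - a) * (1 - q)) := by
  have hterm : ∀ k, -(a / (1 - a)) * q ^ k ≤ log (1 - a * q ^ k) := fun k => by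
    have hpos := one_sub_mul_pow_pos hq0 hq1 ha1 k
    have hqk : q ^ k ≤ 1 := pow_le_one₀ hq0 hq1.le
    calc -(a / (1 - a)) * q ^ k ≤ -(a * q ^ k / (1 - a * q ^ k)) := by
          rw [neg_mul, neg_le_neg_iff, div_mul_eq_mul_div]
          gcongr
          nlinarith
      _ = 1 - (1 - a * q ^ k)⁻¹ := by field_simp; ring
      _ ≤ log (1 - a * q ^ k) := one_sub_inv_le_log_of_pos hpos
  have hsum : -(a / ((1 - a) * (1 - q))) ≤ ∑' k, log (1 - a * q ^ k) := by
    calc -(a / ((1 - a) * (1 - q))) = ∑' k, -(a / (1 - a)) * q ^ k := by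
          rw [tsum_mul_left, tsum_geometric_of_lt_one hq0 hq1]; field_simp
      _ ≤ _ := ((summable_geometric_of_lt_one hq0 hq1).mul_left _).tsum_le_tsum hterm
          (summable_log_one_sub_mul_pow hq0 hq1)
  rw [qPochInf_eq_exp_tsum_log hq0 hq1 ha1]
  linarith [add_one_le_exp (∑' k, log (1 - a * q ^ k))]

end qPochhammer

theorem qPochInf_one (q : ℝ) : qPochInf q 1 = 0 :=
  tprod_of_exists_eq_zero ⟨0, by simp⟩

noncomputable def oneSubQGamma (q α : ℝ) (n : ℕ) : ℝ := 1 - qgamma q n (α + 1)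

theorem rQL_eq (q α : ℝ) (n : ℕ) :
    rQL q α n = oneSubQGamma q α (n + 1) / oneSubQGamma q α n := by
  simp [rQL, oneSubQGamma]

theorem oneSubQGamma_zero (q α : ℝ) : oneSubQGamma q α 0 = 1 := by
  simp [oneSubQGamma, qgamma, qPochInf_one]

section qLaguerre

variable {q α : ℝ} (hq0 : 0 < q) (hq1 : q < 1) (hα : -1 < α)
include hq0 hq1 hα

theorem rpow_natCast_add_lt_one (n : ℕ) : q ^ ((n : ℝ) + (α + 1)) < 1 :=
  rpow_lt_one hq0.le hq1 (by linarith [n.cast_nonneg (α := ℝ)])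

theorem oneSubQGamma_pos (n : ℕ) : 0 < oneSubQGamma q α n := by
  rcases n.eq_zero_or_pos with rfl | hn
  · simp [oneSubQGamma_zero]
  have hlt : q ^ ((n : ℝ) + (α + 1)) < q ^ (n : ℝ) :=
    rpow_lt_rpow_of_exponent_gt hq0 hq1 (by linarith)
  have hnum := qPochInf_lt_qPochInf hq0.le hq1 hlt (rpow_lt_one hq0.le hq1 (by positivity))
  have hden := qPochInf_pos hq0.le hq1 (rpow_natCast_add_lt_one hq0 hq1 hα n)
  rw [oneSubQGamma, qgamma, sub_pos, div_lt_one hden]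
  exact hnum

theorem oneSubQGamma_le (n : ℕ) : oneSubQGamma q α n ≤ q ^ n / (1 - q) ^ 2 := by
  have h1q : 0 < 1 - q := by linarith
  rcases n.eq_zero_or_pos with rfl | hn
  · rw [oneSubQGamma_zero, pow_zero, le_div_iff₀ (by positivity)]
    nlinarith
  have hqn0 : (0 : ℝ) ≤ q ^ n := by positivity
  have hqn1 : q ^ n ≤ q := pow_le_of_le_one hq0.le hq1.le hn.ne'
  have hden0 := qPochInf_pos hq0.le hq1 (rpow_natCast_add_lt_one hq0 hq1 hα n)
  have hden1 := qPochInf_le_one hq0.le hq1 (by positivity) (rpow_natCast_add_lt_one hq0 hq1 hα n)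
  have hnum0 := qPochInf_pos hq0.le hq1 (by linarith : q ^ n < 1)
  have hgamma : qPochInf q (q ^ n) ≤ qgamma q n (α + 1) := by
    rw [qgamma, rpow_natCast, le_div_iff₀ hden0]
    nlinarith
  calc oneSubQGamma q α n ≤ 1 - qPochInf q (q ^ n) := by rw [oneSubQGamma]; linarith
    _ ≤ q ^ n / ((1 - q ^ n) * (1 - q)) := one_sub_qPochInf_le hq0.le hq1 hqn0 (by linarith)
    _ ≤ q ^ n / (1 - q) ^ 2 := by
      rw [sq]
      gcongr

theorem lamQL_div_muQL (k : ℕ) :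
    lamQL q α k / muQL q α (k + 1) = q * (1 - q ^ (α + 1) * q ^ k) / (1 - q * q ^ k) *
      (oneSubQGamma q α k / oneSubQGamma q α (k + 2)) := by
  have hexp : q ^ (-(2 * (k : ℝ)) - α - 1) = q * q ^ (-(2 * ((k + 1 : ℕ) : ℝ)) - α) := by
    rw [show -(2 * (k : ℝ)) - α - 1 = 1 + (-(2 * ((k + 1 : ℕ) : ℝ)) - α) by push_cast; ring,
      rpow_add hq0, rpow_one]
  have hlam : q ^ ((k : ℝ) + α + 1) = q ^ (α + 1) * q ^ k := by
    rw [← rpow_natCast, ← rpow_add hq0]; ring_nf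
  have hmu : q ^ ((k + 1 : ℕ) : ℝ) = q * q ^ k := by rw [rpow_natCast, pow_succ']
  have hmu_pos : 0 < 1 - q * q ^ k := one_sub_mul_pow_pos hq0.le hq1 hq1 k
  have hg := oneSubQGamma_pos hq0 hq1 hα
  have := (hg k).ne'
  have := (hg (k + 1)).ne'
  have := (hg (k + 2)).ne'
  have := (rpow_pos_of_pos hq0 (-(2 * ((k + 1 : ℕ) : ℝ)) - α)).ne'
  rw [lamQL, muQL, rQL_eq, rQL_eq, hexp, hlam, hmu]
  field_simp

theorem piQL_eq (n : ℕ) :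
    piQL q α n = q ^ n * qPochN q (q ^ (α + 1)) n / qPochN q q n *
      (oneSubQGamma q α 1 / (oneSubQGamma q α n * oneSubQGamma q α (n + 1))) := by
  rw [piQL, prod_congr rfl fun k _ => lamQL_div_muQL hq0 hq1 hα k, prod_mul_distrib,
    prod_div_distrib, prod_mul_distrib, prod_const, card_range,
    prod_range_div_add_two fun k => (oneSubQGamma_pos hq0 hq1 hα k).ne', oneSubQGamma_zero,
    one_mul, qPochN, qPochN]

theorem le_piQL (n : ℕ) :
    qPochInf q (q ^ (α + 1)) * oneSubQGamma q α 1 * (1 - q) ^ 4 ≤ piQL q α n := by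
  have h1q : 0 < 1 - q := by linarith
  have ha0 : 0 ≤ q ^ (α + 1) := by positivity
  have ha1 : q ^ (α + 1) < 1 := rpow_lt_one hq0.le hq1 (by linarith)
  have hA := qPochInf_le_qPochN hq0.le hq1 ha0 ha1 n
  have hA0 := qPochInf_pos hq0.le hq1 ha1
  have hB0 := qPochN_pos hq0.le hq1 hq1 n
  have hB1 := qPochN_le_one hq0.le hq1 hq0.le hq1 n
  have hg := oneSubQGamma_pos hq0 hq1 hα
  have hg1 := hg 1
  have hgn := oneSubQGamma_le hq0 hq1 hα n
  have hgn1 : oneSubQGamma q α (n + 1) ≤ 1 / (1 - q) ^ 2 :=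
    (oneSubQGamma_le hq0 hq1 hα (n + 1)).trans (by gcongr; exact pow_le_one₀ hq0.le hq1.le)
  have hden : qPochN q q n * oneSubQGamma q α n * oneSubQGamma q α (n + 1) ≤
      q ^ n / (1 - q) ^ 4 := by
    calc _ ≤ 1 * (q ^ n / (1 - q) ^ 2) * (1 / (1 - q) ^ 2) := by
          have := hg n
          have := hg (n + 1)
          gcongr
      _ = q ^ n / (1 - q) ^ 4 := by field_simp
  have hpiQL : piQL q α n = q ^ n * qPochN q (q ^ (α + 1)) n * oneSubQGamma q α 1 /
      (qPochN q q n * oneSubQGamma q α n * oneSubQGamma q α (n + 1)) := by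
    rw [piQL_eq hq0 hq1 hα]; field_simp
  rw [hpiQL, le_div_iff₀ (by have := hg n; have := hg (n + 1); positivity)]
  calc _ ≤ qPochInf q (q ^ (α + 1)) * oneSubQGamma q α 1 * (1 - q) ^ 4 *
        (q ^ n / (1 - q) ^ 4) := by gcongr
    _ = q ^ n * qPochInf q (q ^ (α + 1)) * oneSubQGamma q α 1 := by field_simp
    _ ≤ _ := by gcongr

end qLaguerre

open Filter in
/-- First claim in the proof of Theorem 6.11: `Σ_{j=0}^∞ π̃_j^{(α)} = ∞`, i.e. the
partial sums of the sequence `π̃_j^{(α)}` tend to `+∞`. -/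
theorem modified_qLaguerre_pi_sum_diverges
    (q α : ℝ) (hq0 : 0 < q) (hq1 : q < 1) (hα : -1 < α) :
    Tendsto (fun n : ℕ => ∑ j ∈ Finset.range (n + 1), piQL q α j) atTop atTop := by
  have hc : 0 < qPochInf q (q ^ (α + 1)) * oneSubQGamma q α 1 * (1 - q) ^ 4 := by
    have := qPochInf_pos hq0.le hq1 (rpow_lt_one hq0.le hq1 (by linarith : 0 < α + 1))
    have := oneSubQGamma_pos hq0 hq1 hα 1
    have : 0 < 1 - q := by linarith
    positivity
  exact (tendsto_sum_range_atTop_of_le hc (le_piQL hq0 hq1 hα)).comp (tendsto_add_atTop_nat 1)
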